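/- Define d_{n,k} = Σ_{i=2k}^{n} (n-i+1)·C(n-k+1, i-2k). Then for all positive integers n and k with n ≥ 2k+2, d_{n,k}² ≥ d_{n,k+1}·d_{n,k-1}. -/

import Mathlib

/-!
The numbers `d n k` satisfy the Pascal-type recurrence `d (n+2) (k+1) = d (n+1) (k+1) + d n k`,
with first column `d n 0 = (n+1) 2^n`. Row log-concavity is proved by induction on `n` together
with two ratio inequalities: `d n (k+1) / d n k` is nondecreasing in `n`, and
`d (n+1) (k+2) / d (n+1) (k+1) ≤ d n (k+1) / d n k`. Expanding every entry of row `n+1` or `n+2`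
by the recurrence turns each of the three inequalities into a sum of instances on earlier rows.
In column `0`, where the recurrence does not apply, both base inequalities are checked on the
closed forms of the first three columns.
-/

open Finset

/-- `d n k = Σ_{i=2k}^{n} (n-i+1)·C(n-k+1, i-2k)`. -/
def d (n k : ℕ) : ℕ :=
  ∑ i ∈ Finset.Icc (2 * k) n, (n - i + 1) * Nat.choose (n - k + 1) (i - 2 * k)

def weightedChooseSum (N m : ℕ) : ℕ := ∑ j ∈ range (N + 1), (N + 1 - j) * m.choose j

lemma weightedChooseSum_zero_left (m : ℕ) : weightedChooseSum 0 m = 1 := by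
  simp [weightedChooseSum]

lemma weightedChooseSum_succ_left (N m : ℕ) :
    weightedChooseSum (N + 1) m = weightedChooseSum N m + ∑ j ∈ range (N + 2), m.choose j := by
  have hsplit : ∀ j ∈ range (N + 2),
      (N + 1 + 1 - j) * m.choose j = (N + 1 - j) * m.choose j + m.choose j := by
    intro j hj
    rw [mem_range] at hj
    rw [show N + 1 + 1 - j = (N + 1 - j) + 1 by omega, add_mul, one_mul]
  rw [weightedChooseSum, sum_congr rfl hsplit, sum_add_distrib, sum_range_succ, weightedChooseSum]
  simp

lemma weightedChooseSum_succ_succ (N m : ℕ) :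
    weightedChooseSum (N + 1) (m + 1) = weightedChooseSum (N + 1) m + weightedChooseSum N m := by
  simp only [weightedChooseSum]
  rw [sum_range_succ' (fun j => (N + 1 + 1 - j) * (m + 1).choose j),
    sum_range_succ' (fun j => (N + 1 + 1 - j) * m.choose j)]
  simp only [Nat.choose_succ_succ, Nat.choose_zero_right, Nat.succ_sub_succ, mul_add,
    sum_add_distrib, Nat.sub_zero]
  ring

lemma d_eq_weightedChooseSum {n k : ℕ} (h : 2 * k ≤ n) :
    d n k = weightedChooseSum (n - 2 * k) (n - k + 1) := by
  refine sum_nbij' (fun i => i - 2 * k) (fun j => j + 2 * k) ?_ ?_ ?_ ?_ ?_ <;>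
    intro i hi <;> simp only [mem_Icc, mem_range] at hi ⊢ <;> try omega
  congr 1
  omega

lemma d_eq_zero_iff {n k : ℕ} : d n k = 0 ↔ n < 2 * k := by
  constructor
  · intro h0
    by_contra! h
    have hfirst := single_le_sum (f := fun j => (n - 2 * k + 1 - j) * (n - k + 1).choose j)
      (fun _ _ => Nat.zero_le _) (mem_range.2 (Nat.succ_pos (n - 2 * k)))
    rw [← weightedChooseSum, ← d_eq_weightedChooseSum h, h0] at hfirst
    simp at hfirst
  · intro h
    rw [d, Icc_eq_empty (by omega), sum_empty]

theorem d_add_two_succ (n k : ℕ) : d (n + 2) (k + 1) = d (n + 1) (k + 1) + d n k := by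
  rcases lt_trichotomy n (2 * k) with h | rfl | h
  · simp only [d_eq_zero_iff.2 (by omega : n + 2 < 2 * (k + 1)),
      d_eq_zero_iff.2 (by omega : n + 1 < 2 * (k + 1)), d_eq_zero_iff.2 h]
  · rw [d_eq_weightedChooseSum (by omega), d_eq_weightedChooseSum le_rfl,
      d_eq_zero_iff.2 (by omega), show 2 * k + 2 - 2 * (k + 1) = 0 by omega, Nat.sub_self,
      weightedChooseSum_zero_left, weightedChooseSum_zero_left]
  · obtain ⟨N, hN⟩ : ∃ N, n - 2 * k = N + 1 := ⟨n - 2 * k - 1, by omega⟩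
    rw [d_eq_weightedChooseSum (by omega), d_eq_weightedChooseSum (by omega),
      d_eq_weightedChooseSum h.le, hN, show n + 2 - 2 * (k + 1) = N + 1 by omega,
      show n + 2 - (k + 1) + 1 = (n - k + 1) + 1 by omega,
      show n + 1 - 2 * (k + 1) = N by omega, show n + 1 - (k + 1) + 1 = n - k + 1 by omega,
      weightedChooseSum_succ_succ, add_comm]

lemma d_zero_right (n : ℕ) : d n 0 = (n + 1) * 2 ^ n := by
  have hd : ∀ n, d n 0 = weightedChooseSum n (n + 1) := fun n => by
    simpa using d_eq_weightedChooseSum (n := n) (k := 0) (Nat.zero_le _)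
  induction n with
  | zero => simp [hd, weightedChooseSum]
  | succ n ih =>
    rw [hd] at *
    rw [weightedChooseSum_succ_succ, weightedChooseSum_succ_left, Nat.sum_range_choose, ih]
    ring

lemma d_add_two_one (n : ℕ) : d (n + 2) 1 = n * 2 ^ (n + 1) + 1 := by
  induction n with
  | zero => decide
  | succ n ih =>
    rw [d_add_two_succ (n + 1) 0, ih, d_zero_right]
    ring

lemma d_add_five_two (n : ℕ) : d (n + 5) 2 = n * 2 ^ (n + 3) + (n + 6) := by
  induction n with
  | zero => decide
  | succ n ih =>
    rw [show n + 1 + 5 = n + 4 + 2 from rfl, d_add_two_succ (n + 4) 1, ih, d_add_two_one]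
    ring

lemma sq_add_six_le_two_pow (m : ℕ) : (m + 6) ^ 2 ≤ 72 * 2 ^ m := by
  induction m with
  | zero => norm_num
  | succ m ih =>
    calc (m + 1 + 6) ^ 2 ≤ 2 * (m + 6) ^ 2 := by nlinarith [Nat.zero_le m]
      _ ≤ 72 * 2 ^ (m + 1) := by rw [pow_succ 2 m]; omega

lemma d_two_mul_d_zero_le_sq (n : ℕ) : d n 2 * d n 0 ≤ d n 1 ^ 2 := by
  match n with
  | 0 | 1 | 2 | 3 => rw [d_eq_zero_iff.2 (by omega : _ < 2 * 2)]; simp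
  | 4 => decide
  | m + 5 =>
    rw [d_add_five_two, d_zero_right, show m + 5 = m + 3 + 2 from rfl, d_add_two_one,
      show 2 ^ (m + 3 + 2) = 4 * 2 ^ (m + 3) by ring,
      show 2 ^ (m + 3 + 1) = 2 * 2 ^ (m + 3) by ring]
    have hsq : (m + 6) ^ 2 ≤ 9 * 2 ^ (m + 3) := by
      have := sq_add_six_le_two_pow m
      rw [pow_add]
      omega
    set t := 2 ^ (m + 3)
    -- (m+3)^2 - m(m+6) = 9, so the inequality reduces to `(m+6)^2 ≤ 9t`
    nlinarith [Nat.mul_le_mul_right t hsq]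

lemma d_succ_zero_mul_d_one_le (n : ℕ) : d (n + 1) 0 * d n 1 ≤ d n 0 * d (n + 1) 1 := by
  match n with
  | 0 | 1 => rw [d_eq_zero_iff.2 (by omega : _ < 2 * 1)]; simp
  | m + 2 =>
    rw [d_zero_right, d_zero_right, d_add_two_one, show m + 2 + 1 = m + 1 + 2 from rfl,
      d_add_two_one, show 2 ^ (m + 2 + 1) = 4 * 2 ^ (m + 1) by ring,
      show 2 ^ (m + 1 + 1) = 2 * 2 ^ (m + 1) by ring]
    have hs : m + 1 < 2 ^ (m + 1) := Nat.lt_two_pow_self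
    set s := 2 ^ (m + 1)
    nlinarith [Nat.mul_le_mul_right s (show 2 * (m + 4) ≤ 12 * s + (m + 3) by omega)]

/-- Transitivity of `x / y ≤ u / v ≤ p / q`, cross-multiplied. -/
lemma mul_le_mul_of_cross_le_of_cross_le {x y u v p q : ℕ} (hv : 0 < v)
    (h₁ : x * v ≤ y * u) (h₂ : u * q ≤ p * v) : x * q ≤ y * p := by
  refine Nat.le_of_mul_le_mul_right ?_ hv
  calc x * q * v = x * v * q := by ring
    _ ≤ y * u * q := Nat.mul_le_mul_right q h₁
    _ = y * (u * q) := by ring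
    _ ≤ y * (p * v) := Nat.mul_le_mul_left y h₂
    _ = y * p * v := by ring

lemma d_log_concave_step (m k : ℕ)
    (hA : d (m + 1) (k + 3) * d (m + 1) (k + 1) ≤ d (m + 1) (k + 2) ^ 2)
    (hB : d m (k + 2) * d m k ≤ d m (k + 1) ^ 2)
    (hX : d (m + 1) (k + 1) * d m (k + 2) ≤ d m (k + 1) * d (m + 1) (k + 2))
    (hW : d (m + 1) (k + 3) * d m (k + 1) ≤ d (m + 1) (k + 2) * d m (k + 2)) :
    d (m + 2) (k + 3) * d (m + 2) (k + 1) ≤ d (m + 2) (k + 2) ^ 2 := by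
  have hAB : d (m + 1) (k + 3) * d m k ≤ d (m + 1) (k + 2) * d m (k + 1) := by
    rcases Nat.eq_zero_or_pos (d m (k + 1)) with h0 | hpos
    · rw [d_eq_zero_iff.2 (by have := d_eq_zero_iff.1 h0; omega), zero_mul]
      exact Nat.zero_le _
    · exact mul_le_mul_of_cross_le_of_cross_le hpos hW (by rw [← sq]; exact hB)
  rw [d_add_two_succ m (k + 2), d_add_two_succ m (k + 1), d_add_two_succ m k]
  nlinarith

lemma d_diag_step (s k : ℕ)
    (hLC : d (s + 1) (k + 2) * d (s + 1) k ≤ d (s + 1) (k + 1) ^ 2)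
    (hX : d (s + 1) k * d s (k + 1) ≤ d s k * d (s + 1) (k + 1)) :
    d (s + 2) (k + 2) * d (s + 1) k ≤ d (s + 2) (k + 1) * d (s + 1) (k + 1) := by
  rw [d_add_two_succ s (k + 1), d_add_two_succ s k]
  nlinarith

lemma d_ratio_step (s k : ℕ)
    (hW : d (s + 1) (k + 2) * d s k ≤ d (s + 1) (k + 1) * d s (k + 1)) :
    d (s + 2) (k + 1) * d (s + 1) (k + 2) ≤ d (s + 1) (k + 1) * d (s + 2) (k + 2) := by
  rw [d_add_two_succ s k, d_add_two_succ s (k + 1)]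
  nlinarith

theorem d_log_concave_and_ratio_mono (r : ℕ) :
    (∀ k, d r (k + 2) * d r k ≤ d r (k + 1) ^ 2) ∧
    (∀ k, d (r + 1) (k + 2) * d r k ≤ d (r + 1) (k + 1) * d r (k + 1)) ∧
    (∀ k, d (r + 1) k * d r (k + 1) ≤ d r k * d (r + 1) (k + 1)) := by
  induction r using Nat.strong_induction_on with
  | _ r ih =>
  have hLC : ∀ k, d r (k + 2) * d r k ≤ d r (k + 1) ^ 2 := by
    rintro (_ | k)
    · exact d_two_mul_d_zero_le_sq r
    · match r, ih with
      | 0, _ | 1, _ => rw [d_eq_zero_iff.2 (by omega)]; simp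
      | m + 2, ih =>
        obtain ⟨hA, -, -⟩ := ih (m + 1) (by omega)
        obtain ⟨hB, hW, hX⟩ := ih m (by omega)
        exact d_log_concave_step m k (hA (k + 1)) (hB k) (hX (k + 1)) (hW (k + 1))
  refine ⟨hLC, fun k => ?_, fun k => ?_⟩
  · match r, ih, hLC with
    | 0, _, _ => rw [d_eq_zero_iff.2 (by omega)]; simp
    | s + 1, ih, hLC => exact d_diag_step s k (hLC k) ((ih s (by omega)).2.2 k)
  · match k, r, ih with
    | 0, r, _ => exact d_succ_zero_mul_d_one_le r
    | k + 1, 0, _ => rw [d_eq_zero_iff.2 (by omega : 0 < 2 * (k + 2))]; simp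
    | k + 1, s + 1, ih => exact d_ratio_step s k ((ih s (by omega)).2.1 k)

theorem stmt14_general (n k : ℕ) (hk : 1 ≤ k) :
    d n (k + 1) * d n (k - 1) ≤ d n k ^ 2 := by
  obtain ⟨j, rfl⟩ : ∃ j, k = j + 1 := ⟨k - 1, by omega⟩
  simpa using (d_log_concave_and_ratio_mono n).1 j

/-- For positive integers `n, k` with `n ≥ 2k+2`, `d_{n,k}² ≥ d_{n,k+1}·d_{n,k-1}`. -/
theorem stmt14 (n k : ℕ) (hk : 1 ≤ k) (h : 2 * k + 2 ≤ n) :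
    d n (k + 1) * d n (k - 1) ≤ d n k ^ 2 :=
  stmt14_general n k hk
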